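/- Let p, q : ℝⁿ → [1,∞] be measurable exponents. Suppose {(f_j^n)_{j∈ℕ₀}}_{n∈ℕ₀} is a sequence of elements of the mixed Lebesgue-sequence space ℓ^{q(·)}(L^{p(·)}) with |f_j^n| ≤ |f_j^{n+1}| pointwise for all j, n, and f_j^n(x) → f_j(x) for all j and x. Then sup_n ‖(f_j^n)_j‖_{ℓ^{q(·)}(L^{p(·)})} = ‖(f_j)_j‖_{ℓ^{q(·)}(L^{p(·)})}. -/

import Mathlib

open MeasureTheory ENNReal Filter
open scoped SchwartzMap FourierTransform

noncomputable section

/-- Euclidean space ℝⁿ. -/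
abbrev En (n : ℕ) := EuclideanSpace ℝ (Fin n)

/-- `ω_p(t)`: `t^p` for finite `p`; for `p = ∞` it is `0` if `t ≤ 1` and `∞` otherwise. -/
def omegaP (p t : ℝ≥0∞) : ℝ≥0∞ :=
  if p = ∞ then (if t ≤ 1 then 0 else ∞) else t ^ p.toReal

/-- Variable exponent modular `ρ_{p(·)}` on nonnegative (ℝ≥0∞-valued) functions. -/
def rhoP {n : ℕ} (p : En n → ℝ≥0∞) (F : En n → ℝ≥0∞) : ℝ≥0∞ :=
  ∫⁻ x, omegaP (p x) (F x)

/-- Luxemburg norm for the variable exponent Lebesgue space. -/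
def luxNorm {n : ℕ} (p : En n → ℝ≥0∞) (F : En n → ℝ≥0∞) : ℝ≥0∞ :=
  sInf {l : ℝ≥0∞ | 0 < l ∧ rhoP p (fun x => F x / l) ≤ 1}

/-- The nonnegative absolute value of a real function, as an ℝ≥0∞-valued function. -/
def nnAbs {n : ℕ} (f : En n → ℝ) : En n → ℝ≥0∞ := fun x => ENNReal.ofReal |f x|

/-- Modular of the mixed Lebesgue-sequence space `ℓ^{q(·)}(L^{p(·)})`
(convention `λ^{1/∞} = λ^0 = 1`). -/
def mixedModular {n : ℕ} (q p : En n → ℝ≥0∞) (F : ℕ → En n → ℝ≥0∞) : ℝ≥0∞ :=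
  ∑' j, sInf {l : ℝ≥0∞ | 0 < l ∧ rhoP p (fun x => F j x / l ^ ((q x)⁻¹).toReal) ≤ 1}

/-- Quasi-norm of the mixed Lebesgue-sequence space `ℓ^{q(·)}(L^{p(·)})`. -/
def mixedNorm {n : ℕ} (q p : En n → ℝ≥0∞) (F : ℕ → En n → ℝ≥0∞) : ℝ≥0∞ :=
  sInf {m : ℝ≥0∞ | 0 < m ∧ mixedModular q p (fun j x => F j x / m) ≤ 1}

/-- `g` is locally log-Hölder continuous with constant `c`. -/
def LocLogHolder {n : ℕ} (c : ℝ) (g : En n → ℝ) : Prop :=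
  0 < c ∧ ∀ x y : En n, |g x - g y| ≤ c / Real.log (Real.exp 1 + 1 / ‖x - y‖)

/-- `g ∈ C^log_loc(ℝⁿ)`. -/
def ClogLoc {n : ℕ} (g : En n → ℝ) : Prop := ∃ c, LocLogHolder c g

/-- `g` is globally log-Hölder continuous: locally log-Hölder plus the log-Hölder
decay condition at infinity. -/
def GlobLogHolder {n : ℕ} (g : En n → ℝ) : Prop :=
  ClogLoc g ∧ ∃ c g_inf : ℝ, 0 < c ∧ ∀ x : En n, |g x - g_inf| ≤ c / Real.log (Real.exp 1 + ‖x‖)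

/-- A measurable variable exponent `p : ℝⁿ → [1,∞]`. -/
def IsExponent {n : ℕ} (p : En n → ℝ≥0∞) : Prop := Measurable p ∧ ∀ x, 1 ≤ p x

/-- `p ∈ 𝒫^log(ℝⁿ)`: a variable exponent with `1/p` globally log-Hölder continuous. -/
def Plog {n : ℕ} (p : En n → ℝ≥0∞) : Prop :=
  IsExponent p ∧ GlobLogHolder (fun x => ((p x)⁻¹).toReal)

/-- Convolution of two real functions. -/
def conv {n : ℕ} (φ f : En n → ℝ) (x : En n) : ℝ := ∫ y, φ (x - y) * f y

/-- Partial derivative in the `k`-th coordinate direction. -/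
def pderiv {n : ℕ} (k : Fin n) (f : En n → ℝ) (x : En n) : ℝ :=
  fderiv ℝ f x (EuclideanSpace.single k 1)

/-- Besov quasi-norm with variable smoothness and integrability, relative to a
system `(φ_j)_j`. -/
def besovNorm {n : ℕ} (φ : ℕ → En n → ℝ) (s : En n → ℝ) (q p : En n → ℝ≥0∞)
    (g : En n → ℝ) : ℝ≥0∞ :=
  mixedNorm q p (fun j x => ENNReal.ofReal ((2:ℝ) ^ ((j:ℝ) * s x) * |conv (φ j) g x|))

/-- A smooth dyadic resolution of unity `(ℱφ_j)_j`. -/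
structure DyadicResolution (n : ℕ) where
  φ : ℕ → 𝓢(En n, ℝ)
  supp_zero : ∀ ξ : En n, 2 < ‖ξ‖ → 𝓕 (fun y => (φ 0 y : ℂ)) ξ = 0
  supp_pos : ∀ j : ℕ, 0 < j → ∀ ξ : En n,
      (‖ξ‖ < (2:ℝ) ^ ((j:ℤ) - 1) ∨ (2:ℝ) ^ ((j:ℤ) + 1) < ‖ξ‖) →
      𝓕 (fun y => (φ j y : ℂ)) ξ = 0
  sum_one : ∀ ξ : En n, ∑' j, 𝓕 (fun y => (φ j y : ℂ)) ξ = 1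

/-- The commutator `[V·∇, Δ_j]f` relative to a convolution kernel `φj`. -/
def commVf {n : ℕ} (φj : En n → ℝ) (V : Fin n → En n → ℝ) (f : En n → ℝ)
    (x : En n) : ℝ :=
  ∑ k, (V k x * pderiv k (conv φj f) x - conv φj (fun y => V k y * pderiv k f y) x)

end

/-!
The mixed quasi-norm is built from nested "Luxemburg infima" `inf {λ > 0 : Φ λ ≤ 1}` over a
modular `Φ` that decreases in `λ`. Such an infimum commutes with pointwise suprema of modulars,
and each modular in the chain (`ω_p`, the Lebesgue integral, the sum over `j`) commutes with
increasing suprema. Hence the norm of `sup_m |f_j^m| = |f_j|` is the supremum of the norms.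
-/

open MeasureTheory ENNReal Filter Topology

lemma omegaP_mono (p : ℝ≥0∞) : Monotone (omegaP p) := by
  intro a b hab
  unfold omegaP
  split_ifs with _ ha hb hb'
  · exact le_rfl
  · exact zero_le
  · exact absurd (hab.trans hb') ha
  · exact le_rfl
  · exact rpow_le_rpow hab toReal_nonneg

lemma omegaP_iSup {ι : Sort*} [Nonempty ι] (p : ℝ≥0∞) (t : ι → ℝ≥0∞) :
    omegaP p (⨆ i, t i) = ⨆ i, omegaP p (t i) := by
  unfold omegaP
  split_ifs with hp hs
  · simp [fun i => (le_iSup t i).trans hs]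
  · obtain ⟨i, hi⟩ := lt_iSup_iff.mp (not_le.mp hs)
    exact (top_unique (le_iSup_of_le i (by simp [not_le.mpr hi]))).symm
  · rcases (toReal_nonneg (a := p)).eq_or_lt with h0 | hpos
    · simp [← h0]
    · exact (orderIsoRpow _ hpos).map_iSup t

lemma measurable_omegaP {α : Type*} [MeasurableSpace α] {p u : α → ℝ≥0∞}
    (hp : Measurable p) (hu : Measurable u) : Measurable fun x => omegaP (p x) (u x) :=
  Measurable.ite (hp (measurableSet_singleton ∞))
    (Measurable.ite (measurableSet_le hu measurable_const) measurable_const measurable_const)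
    (hu.pow hp.ennreal_toReal)

noncomputable def luxInf (Φ : ℝ≥0∞ → ℝ≥0∞) : ℝ≥0∞ :=
  sInf {l | 0 < l ∧ Φ l ≤ 1}

lemma luxInf_mono {Φ Ψ : ℝ≥0∞ → ℝ≥0∞} (h : Φ ≤ Ψ) : luxInf Φ ≤ luxInf Ψ :=
  sInf_le_sInf fun _ ⟨hl, hΨ⟩ => ⟨hl, (h _).trans hΨ⟩

lemma le_one_of_luxInf_lt {Φ : ℝ≥0∞ → ℝ≥0∞} (hΦ : Antitone Φ) {l : ℝ≥0∞}
    (hl : luxInf Φ < l) : Φ l ≤ 1 := by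
  obtain ⟨a, ⟨-, ha⟩, hal⟩ := sInf_lt_iff.mp hl
  exact (hΦ hal.le).trans ha

lemma luxInf_iSup {ι : Sort*} {Φ : ι → ℝ≥0∞ → ℝ≥0∞} (hΦ : ∀ i, Antitone (Φ i)) :
    luxInf (fun l => ⨆ i, Φ i l) = ⨆ i, luxInf (Φ i) := by
  refine le_antisymm (le_of_forall_gt_imp_ge_of_dense fun l hl => ?_)
    (iSup_le fun i => luxInf_mono fun l => le_iSup (Φ · l) i)
  refine sInf_le ⟨zero_le.trans_lt hl, iSup_le fun i => ?_⟩
  exact le_one_of_luxInf_lt (hΦ i) ((le_iSup _ i).trans_lt hl)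

lemma ENNReal.tsum_iSup_of_monotone {α : Type*} {f : ℕ → α → ℝ≥0∞} (hf : Monotone f) :
    ∑' a, ⨆ m, f m a = ⨆ m, ∑' a, f m a := by
  refine le_antisymm ?_ (iSup_le fun m => ENNReal.tsum_le_tsum fun a => le_iSup (f · a) m)
  rw [ENNReal.tsum_eq_iSup_sum]
  refine iSup_le fun s => ?_
  rw [ENNReal.finsetSum_iSup_of_monotone fun a _ _ h => hf h a]
  exact iSup_mono fun m => ENNReal.sum_le_tsum s

lemma iSup_ofReal_abs_of_tendsto {u : ℕ → ℝ} {v : ℝ} (hmono : Monotone fun m => |u m|)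
    (hlim : Tendsto u atTop (𝓝 v)) : ⨆ m, ENNReal.ofReal |u m| = ENNReal.ofReal |v| :=
  tendsto_nhds_unique (tendsto_atTop_iSup fun _ _ h => ofReal_le_ofReal (hmono h))
    ((ENNReal.continuous_ofReal.tendsto _).comp hlim.abs)

section

variable {n : ℕ}

lemma rhoP_mono (p : En n → ℝ≥0∞) {F G : En n → ℝ≥0∞} (h : F ≤ G) : rhoP p F ≤ rhoP p G :=
  lintegral_mono fun x => omegaP_mono _ (h x)

lemma rhoP_iSup {p : En n → ℝ≥0∞} (hp : Measurable p) {H : ℕ → En n → ℝ≥0∞}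
    (hH : ∀ m, Measurable (H m)) (hmono : Monotone H) :
    rhoP p (fun x => ⨆ m, H m x) = ⨆ m, rhoP p (H m) := by
  unfold rhoP
  simp_rw [omegaP_iSup]
  exact lintegral_iSup (fun m => measurable_omegaP hp (hH m))
    fun a b hab x => omegaP_mono _ (hmono hab x)

lemma mixedModular_eq_tsum_luxInf (q p : En n → ℝ≥0∞) (F : ℕ → En n → ℝ≥0∞) :
    mixedModular q p F = ∑' j, luxInf fun l => rhoP p fun x => F j x / l ^ ((q x)⁻¹).toReal :=
  rfl

lemma mixedNorm_eq_luxInf (q p : En n → ℝ≥0∞) (F : ℕ → En n → ℝ≥0∞) :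
    mixedNorm q p F = luxInf fun μ => mixedModular q p fun j x => F j x / μ :=
  rfl

lemma antitone_rhoP_div_rpow (q p : En n → ℝ≥0∞) (F : En n → ℝ≥0∞) :
    Antitone fun l : ℝ≥0∞ => rhoP p fun x => F x / l ^ ((q x)⁻¹).toReal :=
  fun _ _ h => rhoP_mono p fun _ => ENNReal.div_le_div_left (rpow_le_rpow h toReal_nonneg) _

lemma mixedModular_mono (q p : En n → ℝ≥0∞) {F G : ℕ → En n → ℝ≥0∞} (h : F ≤ G) :
    mixedModular q p F ≤ mixedModular q p G :=
  ENNReal.tsum_le_tsum fun j => luxInf_mono fun _ =>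
    rhoP_mono p fun x => ENNReal.div_le_div_right (h j x) _

lemma mixedModular_iSup {q p : En n → ℝ≥0∞} (hp : Measurable p) (hq : Measurable q)
    {H : ℕ → ℕ → En n → ℝ≥0∞} (hH : ∀ m j, Measurable (H m j)) (hmono : Monotone H) :
    mixedModular q p (fun j x => ⨆ m, H m j x) = ⨆ m, mixedModular q p (H m) := by
  have hdiv : ∀ l : ℝ≥0∞, Measurable fun x => l ^ ((q x)⁻¹).toReal :=
    fun l => measurable_const.pow hq.inv.ennreal_toReal
  calc mixedModular q p (fun j x => ⨆ m, H m j x)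
      = ∑' j, ⨆ m, luxInf fun l => rhoP p fun x => H m j x / l ^ ((q x)⁻¹).toReal := by
        refine tsum_congr fun j => (congrArg luxInf (funext fun l => ?_)).trans
          (luxInf_iSup fun m => antitone_rhoP_div_rpow q p (H m j))
        simp_rw [ENNReal.iSup_div]
        exact rhoP_iSup hp (fun m => (hH m j).div (hdiv l))
          fun a b hab x => ENNReal.div_le_div_right (hmono hab j x) _
    _ = ⨆ m, mixedModular q p (H m) :=
        ENNReal.tsum_iSup_of_monotone fun a b hab j => luxInf_mono fun _ =>
          rhoP_mono p fun x => ENNReal.div_le_div_right (hmono hab j x) _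

lemma mixedNorm_iSup {q p : En n → ℝ≥0∞} (hp : Measurable p) (hq : Measurable q)
    {H : ℕ → ℕ → En n → ℝ≥0∞} (hH : ∀ m j, Measurable (H m j)) (hmono : Monotone H) :
    mixedNorm q p (fun j x => ⨆ m, H m j x) = ⨆ m, mixedNorm q p (H m) := by
  have hmodular : ∀ μ : ℝ≥0∞, mixedModular q p (fun j x => (⨆ m, H m j x) / μ)
      = ⨆ m, mixedModular q p fun j x => H m j x / μ := fun μ => by
    simp_rw [ENNReal.iSup_div]
    exact mixedModular_iSup hp hq (fun m j => (hH m j).div measurable_const)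
      fun a b hab j x => ENNReal.div_le_div_right (hmono hab j x) _
  simp_rw [mixedNorm_eq_luxInf, hmodular]
  exact luxInf_iSup fun m _ _ h => mixedModular_mono q p fun j x =>
    ENNReal.div_le_div_left h _

end

theorem stmt2_general {n : ℕ} (p q : En n → ℝ≥0∞) (hp : IsExponent p) (hq : IsExponent q)
    (f : ℕ → ℕ → En n → ℝ) (g : ℕ → En n → ℝ)
    (hfm : ∀ m j, Measurable (f m j))
    (hmono : ∀ m j x, |f m j x| ≤ |f (m + 1) j x|)
    (hlim : ∀ j x, Filter.Tendsto (fun m => f m j x) Filter.atTop (nhds (g j x))) :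
    (⨆ m, mixedNorm q p (fun j => nnAbs (f m j))) = mixedNorm q p (fun j => nnAbs (g j)) := by
  have hg : ∀ j, nnAbs (g j) = fun x => ⨆ m, nnAbs (f m j) x := fun j => funext fun x =>
    (iSup_ofReal_abs_of_tendsto (monotone_nat_of_le_succ (hmono · j x)) (hlim j x)).symm
  have hfmono : Monotone fun m j => nnAbs (f m j) :=
    monotone_nat_of_le_succ fun m j x => ofReal_le_ofReal (hmono m j x)
  simp_rw [hg]
  exact (mixedNorm_iSup hp.1 hq.1 (fun m j => (hfm m j).abs.ennreal_ofReal) hfmono).symm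

/-- monotone convergence for the mixed Lebesgue-sequence quasi-norm. -/
theorem stmt2 {n : ℕ} (p q : En n → ℝ≥0∞) (hp : IsExponent p) (hq : IsExponent q)
    (f : ℕ → ℕ → En n → ℝ) (g : ℕ → En n → ℝ)
    (hfm : ∀ m j, Measurable (f m j)) (hgm : ∀ j, Measurable (g j))
    (hmem : ∀ m, mixedNorm q p (fun j => nnAbs (f m j)) ≠ ∞)
    (hmono : ∀ m j x, |f m j x| ≤ |f (m + 1) j x|)
    (hlim : ∀ j x, Filter.Tendsto (fun m => f m j x) Filter.atTop (nhds (g j x))) :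
    (⨆ m, mixedNorm q p (fun j => nnAbs (f m j))) = mixedNorm q p (fun j => nnAbs (g j)) :=
  stmt2_general p q hp hq f g hfm hmono hlim
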